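/- arXiv:math/0301114 — 5 statements merged into one kernel-verified Lean document; each statement's English description precedes it below -/
import Mathlib

section
/- For all integers g ≥ 2 and k with 1 ≤ k ≤ g−1, there exists exactly one pair (α, β) of real numbers with 0 < α < π/3 and 0 < β < π/3 satisfying both equations (cos²α + 1/2)/sin²α = (cos²β + cos β)/sin²β and 6·k·α + 6·(g−k)·β = 2π. -/
open Real

/-- The edge-length matching function `f(α,β)` for the hyperbolicity equations. -/
noncomputable def hypF (α β : ℝ) : ℝ :=
  (Real.cos α ^ 2 + 1 / 2) / Real.sin α ^ 2 -
    (Real.cos β ^ 2 + Real.cos β) / Real.sin β ^ 2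

section Aux

open Real Set

private lemma cos_gt_half {b : ℝ} (hb1 : 0 < b) (hb2 : b < π / 3) : 1 / 2 < Real.cos b := by
  have := Real.cos_lt_cos_of_nonneg_of_le_pi (le_of_lt hb1)
    (by linarith [Real.pi_pos]) hb2
  rwa [Real.cos_pi_div_three] at this

private lemma eq1 {a b : ℝ} (ha1 : 0 < a) (ha2 : a < π / 3) (hb1 : 0 < b) (hb2 : b < π / 3) :
    (Real.cos a ^ 2 + 1 / 2) / Real.sin a ^ 2 =
      (Real.cos b ^ 2 + Real.cos b) / Real.sin b ^ 2 ↔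
    Real.cos b = (2 * Real.cos a ^ 2 + 1) / 3 := by
  have hsa : 0 < Real.sin a := Real.sin_pos_of_pos_of_lt_pi ha1 (by linarith [Real.pi_pos])
  have hcb : 1 / 2 < Real.cos b := cos_gt_half hb1 hb2
  have hcb1 : Real.cos b < 1 := by
    have := Real.cos_lt_cos_of_nonneg_of_le_pi le_rfl (by linarith [Real.pi_pos]) hb1
    simpa using this
  have hsb : Real.sin b ^ 2 = (1 - Real.cos b) * (1 + Real.cos b) := by
    nlinarith [Real.sin_sq_add_cos_sq b]
  have hnum : Real.cos b ^ 2 + Real.cos b = Real.cos b * (1 + Real.cos b) := by ring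
  have h1c : (0:ℝ) < 1 + Real.cos b := by linarith
  have h1c' : (0:ℝ) < 1 - Real.cos b := by linarith
  rw [hsb, hnum, mul_comm (1 - Real.cos b), mul_comm (Real.cos b),
    mul_div_mul_left _ _ (ne_of_gt h1c),
    div_eq_div_iff (by positivity) (ne_of_gt h1c')]
  constructor
  · intro h; nlinarith [Real.sin_sq_add_cos_sq a]
  · intro h; nlinarith [Real.sin_sq_add_cos_sq a]

end Aux

/-- For all integers `g ≥ 2` and `1 ≤ k ≤ g - 1`, there is exactly one pair `(α, β)`
with `0 < α < π/3`, `0 < β < π/3` satisfying the length equation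
`(cos²α + 1/2)/sin²α = (cos²β + cos β)/sin²β` and the angle equation
`6kα + 6(g-k)β = 2π`. -/
theorem unique_solution_hyperbolicity_equations (g k : ℤ) (hg : 2 ≤ g)
    (hk1 : 1 ≤ k) (hk2 : k ≤ g - 1) :
    ∃! p : ℝ × ℝ, 0 < p.1 ∧ p.1 < π / 3 ∧ 0 < p.2 ∧ p.2 < π / 3 ∧
      (Real.cos p.1 ^ 2 + 1 / 2) / Real.sin p.1 ^ 2 =
        (Real.cos p.2 ^ 2 + Real.cos p.2) / Real.sin p.2 ^ 2 ∧
      6 * (k : ℝ) * p.1 + 6 * ((g : ℝ) - (k : ℝ)) * p.2 = 2 * π := by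
  have hπ := Real.pi_pos
  have hk : (1:ℝ) ≤ (k:ℝ) := by exact_mod_cast hk1
  have hgk : (1:ℝ) ≤ (g:ℝ) - (k:ℝ) := by
    have : (k:ℝ) ≤ (g:ℝ) - 1 := by exact_mod_cast hk2
    linarith
  have hgR : (2:ℝ) ≤ (g:ℝ) := by exact_mod_cast hg
  -- the function c(a) = (2 cos²a + 1)/3 and h(a) = 6k a + 6(g-k) arccos(c a)
  set c : ℝ → ℝ := fun a => (2 * Real.cos a ^ 2 + 1) / 3 with hc
  set h : ℝ → ℝ := fun a => 6 * (k:ℝ) * a + 6 * ((g:ℝ) - (k:ℝ)) * Real.arccos (c a) with hh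
  have hcmem : ∀ a ∈ Set.Icc 0 (π/3), c a ∈ Set.Icc (-1:ℝ) 1 := by
    intro a ha
    have h1 : Real.cos a ≤ 1 := Real.cos_le_one a
    have h2 : 0 ≤ Real.cos a := Real.cos_nonneg_of_mem_Icc
      ⟨by linarith [ha.1], by linarith [ha.2]⟩
    constructor <;> simp only [hc] <;> nlinarith
  -- c is strictly decreasing on [0, π/3]
  have hcanti : StrictAntiOn c (Set.Icc 0 (π/3)) := by
    intro x hx y hy hxy
    have hcy : Real.cos y < Real.cos x :=
      Real.cos_lt_cos_of_nonneg_of_le_pi hx.1 (by linarith [hy.2]) hxy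
    have h2 : 0 ≤ Real.cos y := Real.cos_nonneg_of_mem_Icc
      ⟨by linarith [hy.1], by linarith [hy.2]⟩
    simp only [hc]
    nlinarith
  -- h is strictly increasing on [0, π/3]
  have hmono : StrictMonoOn h (Set.Icc 0 (π/3)) := by
    intro x hx y hy hxy
    have := Real.strictAntiOn_arccos (hcmem y hy) (hcmem x hx) (hcanti hx hy hxy)
    simp only [hh]
    have h1 : 6 * (k:ℝ) * x < 6 * (k:ℝ) * y := by nlinarith
    nlinarith
  -- continuity
  have hcont : ContinuousOn h (Set.Icc 0 (π/3)) := by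
    apply ContinuousOn.add
    · exact (continuous_const.mul continuous_id).continuousOn
    · exact (continuous_const.mul (Real.continuous_arccos.comp
        (by continuity))).continuousOn
  -- endpoint values
  have hh0 : h 0 = 0 := by
    simp only [hh, hc, Real.cos_zero]
    norm_num [Real.arccos_one]
  have hhπ : h (π/3) = 2 * (g:ℝ) * π := by
    have : c (π/3) = 1/2 := by simp only [hc, Real.cos_pi_div_three]; norm_num
    simp only [hh, this]
    rw [show (1:ℝ)/2 = Real.cos (π/3) from (Real.cos_pi_div_three).symm,
      Real.arccos_cos (by linarith) (by linarith)]
    ring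
  -- IVT
  have hsub := intermediate_value_Icc (by linarith : (0:ℝ) ≤ π/3) hcont
  rw [hh0, hhπ] at hsub
  have h2π : (2*π) ∈ Set.Icc (0:ℝ) (2*(g:ℝ)*π) := ⟨by linarith, by nlinarith⟩
  obtain ⟨a, hamem, ha2π⟩ := hsub h2π
  have ha0 : 0 < a := by
    rcases lt_or_eq_of_le hamem.1 with h' | h'
    · exact h'
    · exfalso; rw [← h'] at ha2π; rw [hh0] at ha2π; linarith
  have haπ : a < π/3 := by
    rcases lt_or_eq_of_le hamem.2 with h' | h'
    · exact h'
    · exfalso; rw [h'] at ha2π; rw [hhπ] at ha2π; nlinarith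
  -- define β
  have hcam : c a ∈ Set.Icc (-1:ℝ) 1 := hcmem a hamem
  have hca_lt : c a < 1 := by
    have : Real.cos a < 1 := by
      have := Real.cos_lt_cos_of_nonneg_of_le_pi le_rfl (by linarith) ha0
      simpa using this
    simp only [hc]
    nlinarith [Real.cos_le_one a, Real.cos_nonneg_of_mem_Icc
      (⟨by linarith, by linarith⟩ : a ∈ Set.Icc (-(π/2)) (π/2))]
  have hca_gt : 1/2 < c a := by
    have := cos_gt_half ha0 haπ
    simp only [hc]; nlinarith
  set b := Real.arccos (c a) with hb
  have hcosb : Real.cos b = c a := Real.cos_arccos hcam.1 hcam.2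
  have hb0 : 0 < b := Real.arccos_pos.2 hca_lt
  have hbπ : b < π/3 := by
    have : Real.arccos (c a) < Real.arccos (1/2) :=
      Real.strictAntiOn_arccos (by constructor <;> norm_num) hcam hca_gt
    rwa [show (1:ℝ)/2 = Real.cos (π/3) from (Real.cos_pi_div_three).symm,
      Real.arccos_cos (by linarith) (by linarith)] at this
  refine ⟨(a, b), ⟨ha0, haπ, hb0, hbπ, ?_, ?_⟩, ?_⟩
  · exact (eq1 ha0 haπ hb0 hbπ).2 hcosb
  · simpa only [hh] using ha2π
  · rintro ⟨a', b'⟩ ⟨ha0', haπ', hb0', hbπ', hfeq', hangle'⟩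
    have hcb' : Real.cos b' = c a' := (eq1 ha0' haπ' hb0' hbπ').1 hfeq'
    have hb'eq : b' = Real.arccos (c a') := by
      rw [← hcb', Real.arccos_cos (le_of_lt hb0') (by linarith)]
    have hha' : h a' = 2 * π := by
      simp only [hh]
      rw [← hb'eq]
      exact hangle'
    have ha'eq : a' = a := hmono.injOn ⟨le_of_lt ha0', le_of_lt haπ'⟩ hamem
      (by rw [hha', ha2π])
    have : b' = b := by rw [hb'eq, ha'eq]
    simp [ha'eq, this]
end

section
/- For all integers g ≥ 2 and k with 1 ≤ k ≤ g−1, the function φ_{g,k}(α) = f(α, β_{g,k}(α)) is strictly decreasing (strictly antitone) on the open interval (0, π/(3k)). -/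
open Real

/-- `β_{g,k}(α) = (π - 3kα)/(3(g-k))`. -/
noncomputable def hypBeta (g k : ℤ) (α : ℝ) : ℝ :=
  (π - 3 * (k : ℝ) * α) / (3 * ((g : ℝ) - (k : ℝ)))

lemma hypF_eq (α β : ℝ) (hα : Real.sin α ≠ 0) (hβ : Real.sin β ≠ 0) :
    hypF α β = 3 / (2 * Real.sin α ^ 2) - 1 / (1 - Real.cos β) := by
  have hsa : Real.sin α ^ 2 = 1 - Real.cos α ^ 2 := Real.sin_sq α
  have hsb : Real.sin β ^ 2 = 1 - Real.cos β ^ 2 := Real.sin_sq β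
  have h1 : (1 - Real.cos β) ≠ 0 := by
    intro h
    apply hβ
    have : Real.cos β = 1 := by linarith
    nlinarith [Real.sin_sq β]
  have h2 : Real.sin α ^ 2 ≠ 0 := pow_ne_zero _ hα
  have h3 : Real.sin β ^ 2 ≠ 0 := pow_ne_zero _ hβ
  rw [hypF]
  field_simp
  rw [hsa, hsb]
  ring

/-- For integers `g ≥ 2` and `1 ≤ k ≤ g - 1`, the function
`φ_{g,k}(α) = f(α, β_{g,k}(α))` is strictly antitone on `(0, π/(3k))`. -/
theorem phi_strictAntiOn (g k : ℤ) (hg : 2 ≤ g) (hk1 : 1 ≤ k) (hk2 : k ≤ g - 1) :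
    StrictAntiOn (fun α : ℝ => hypF α (hypBeta g k α))
      (Set.Ioo 0 (π / (3 * (k : ℝ)))) := by
  have hkR : (1 : ℝ) ≤ (k : ℝ) := by exact_mod_cast hk1
  have hgkR : (1 : ℝ) ≤ (g : ℝ) - (k : ℝ) := by
    have : (k : ℝ) ≤ (g : ℝ) - 1 := by exact_mod_cast hk2
    linarith
  have hpi : 0 < π := Real.pi_pos
  intro x hx y hy hxy
  obtain ⟨hx0, hx1⟩ := hx
  obtain ⟨hy0, hy1⟩ := hy
  -- bounds on x, y
  have hkpos : (0 : ℝ) < 3 * (k : ℝ) := by linarith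
  have hxpi : 3 * (k : ℝ) * x < π := by
    nlinarith [(lt_div_iff₀ hkpos).mp hx1]
  have hypi : 3 * (k : ℝ) * y < π := by
    nlinarith [(lt_div_iff₀ hkpos).mp hy1]
  have hy_lt : y < π / 2 := by nlinarith
  have hx_lt : x < π / 2 := by linarith
  -- sin bounds
  have hsx : 0 < Real.sin x := Real.sin_pos_of_pos_of_lt_pi hx0 (by linarith)
  have hsy : 0 < Real.sin y := Real.sin_pos_of_pos_of_lt_pi hy0 (by linarith)
  have hsin_lt : Real.sin x < Real.sin y :=
    Real.sin_lt_sin_of_lt_of_le_pi_div_two (by linarith) (le_of_lt hy_lt) hxy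
  -- beta bounds
  have hden : (0 : ℝ) < 3 * ((g : ℝ) - (k : ℝ)) := by linarith
  have hbx0 : 0 < hypBeta g k x := by
    rw [hypBeta]; exact div_pos (by linarith) hden
  have hby0 : 0 < hypBeta g k y := by
    rw [hypBeta]; exact div_pos (by linarith) hden
  have hbxpi : hypBeta g k x < π := by
    rw [hypBeta, div_lt_iff₀ hden]; nlinarith
  have hbypi : hypBeta g k y < π := by
    rw [hypBeta, div_lt_iff₀ hden]; nlinarith
  have hblt : hypBeta g k y < hypBeta g k x := by
    rw [hypBeta, hypBeta]
    exact (div_lt_div_iff_of_pos_right hden).mpr (by nlinarith)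
  have hcos_lt : Real.cos (hypBeta g k x) < Real.cos (hypBeta g k y) :=
    Real.cos_lt_cos_of_nonneg_of_le_pi (le_of_lt hby0) (le_of_lt hbxpi) hblt
  have hcy1 : Real.cos (hypBeta g k y) < 1 := by
    have := Real.cos_lt_cos_of_nonneg_of_le_pi (le_refl (0:ℝ)) (le_of_lt hbypi) hby0
    simpa using this
  have hsbx : 0 < Real.sin (hypBeta g k x) := Real.sin_pos_of_pos_of_lt_pi hbx0 hbxpi
  have hsby : 0 < Real.sin (hypBeta g k y) := Real.sin_pos_of_pos_of_lt_pi hby0 hbypi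
  simp only
  rw [hypF_eq x _ hsx.ne' hsbx.ne', hypF_eq y _ hsy.ne' hsby.ne']
  have h1 : 3 / (2 * Real.sin y ^ 2) < 3 / (2 * Real.sin x ^ 2) := by
    apply div_lt_div_of_pos_left (by norm_num) (by positivity)
    nlinarith
  have h2 : 1 / (1 - Real.cos (hypBeta g k x)) < 1 / (1 - Real.cos (hypBeta g k y)) := by
    apply div_lt_div_of_pos_left one_pos (by linarith)
    linarith
  linarith
end

section
/- For all real α, β with 0 < α < π/3 and 0 < β < π/3, there exists r₀ > 0 such that for every r with 0 < r < r₀, setting t₀ = r/(2 cos α) − √(4cos²α − 1), t₁ = −r/2, and t₂ = −√((3cos β − 1)(2cos β − 1)/(cos β + 1)), all six sums t₀+t₀, t₀+t₁, t₀+t₂, t₁+t₁, t₁+t₂, and t₂+t₂ are strictly negative. -/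
open Real

lemma half_lt_cos_of (x : ℝ) (hx0 : 0 < x) (hx : x < π / 3) :
    1 / 2 < Real.cos x := by
  have h := Real.cos_lt_cos_of_nonneg_of_le_pi (le_of_lt hx0)
    (by linarith [Real.pi_pos]) hx
  rwa [Real.cos_pi_div_three] at h

/-- For `0 < α < π/3` and `0 < β < π/3` there is `r₀ > 0` such that for all
`0 < r < r₀` the tilts `t₀ = r/(2cos α) - √(4cos²α - 1)`, `t₁ = -r/2`,
`t₂ = -√((3cos β - 1)(2cos β - 1)/(cos β + 1))` have all pairwise sums
(including sums of a tilt with itself) strictly negative. -/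
theorem tilts_sums_neg (α β : ℝ) (hα0 : 0 < α) (hα : α < π / 3)
    (hβ0 : 0 < β) (hβ : β < π / 3) :
    ∃ r₀ > (0 : ℝ), ∀ r : ℝ, 0 < r → r < r₀ →
      let t₀ : ℝ := r / (2 * Real.cos α) - Real.sqrt (4 * Real.cos α ^ 2 - 1)
      let t₁ : ℝ := -r / 2
      let t₂ : ℝ :=
        -Real.sqrt ((3 * Real.cos β - 1) * (2 * Real.cos β - 1) / (Real.cos β + 1))
      t₀ + t₀ < 0 ∧ t₀ + t₁ < 0 ∧ t₀ + t₂ < 0 ∧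
        t₁ + t₁ < 0 ∧ t₁ + t₂ < 0 ∧ t₂ + t₂ < 0 := by
  have hca : 1 / 2 < Real.cos α := half_lt_cos_of α hα0 hα
  have hcb : 1 / 2 < Real.cos β := half_lt_cos_of β hβ0 hβ
  have hS : 0 < Real.sqrt (4 * Real.cos α ^ 2 - 1) := by
    apply Real.sqrt_pos.mpr; nlinarith
  have hT : 0 < Real.sqrt ((3 * Real.cos β - 1) * (2 * Real.cos β - 1) /
      (Real.cos β + 1)) := by
    apply Real.sqrt_pos.mpr
    apply div_pos (by nlinarith) (by linarith)
  refine ⟨2 * Real.cos α * Real.sqrt (4 * Real.cos α ^ 2 - 1), by positivity,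
    fun r hr0 hr => ?_⟩
  intro t₀ t₁ t₂
  have hc2 : (0:ℝ) < 2 * Real.cos α := by linarith
  have h0 : t₀ < 0 := by
    have : r / (2 * Real.cos α) < Real.sqrt (4 * Real.cos α ^ 2 - 1) := by
      rw [div_lt_iff₀ hc2]; linarith [hr]
    simp only [t₀]; linarith
  have h1 : t₁ < 0 := by simp only [t₁]; linarith
  have h2 : t₂ < 0 := by simp only [t₂]; linarith
  exact ⟨by linarith, by linarith, by linarith, by linarith, by linarith, by linarith⟩
end

section
/- For every natural number n ≥ 1, the number of fixed-point-free involutions σ of the set Fin n × Fin 4 such that the simple graph on the vertex set Fin n — in which distinct vertices v and w are adjacent if and only if σ maps some pair (v,i) to a pair (w,j) — is connected, is at least (4n−2)‼. -/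
open Nat
open Equiv

namespace CP
abbrev V (n : ℕ) := Fin n × Fin 4

def e {n : ℕ} (x : V n) : V (n+1) := (x.1.castSucc, x.2)
def vg {n : ℕ} (i : Fin 4) : V (n+1) := (Fin.last n, i)

lemma e_inj {n : ℕ} : Function.Injective (e (n := n)) := by
  rintro ⟨x1, x2⟩ ⟨y1, y2⟩ h
  simp only [e, Prod.mk.injEq] at h
  exact Prod.ext (Fin.castSucc_injective _ h.1) h.2

lemma e_ne_vg {n : ℕ} (x : V n) (i : Fin 4) : e x ≠ vg i :=
  fun h => (Fin.castSucc_lt_last x.1).ne (congrArg Prod.fst h)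

lemma vg_inj {n : ℕ} {i j : Fin 4} (h : vg (n:=n) i = vg j) : i = j := by
  simpa [vg] using h

def extFun {n : ℕ} (σ' : Perm (V n)) (m : Fin 4 → Fin 4) : V (n+1) → V (n+1) :=
  fun x => if h : x.1 = Fin.last n then vg (m x.2)
    else e (σ' (x.1.castPred h, x.2))

lemma extFun_e {n : ℕ} (σ' : Perm (V n)) (m : Fin 4 → Fin 4) (x : V n) :
    extFun σ' m (e x) = e (σ' x) := by
  have h : x.1.castSucc ≠ Fin.last n := (Fin.castSucc_lt_last x.1).ne
  simp [extFun, e, h]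

lemma extFun_vg {n : ℕ} (σ' : Perm (V n)) (m : Fin 4 → Fin 4) (i : Fin 4) :
    extFun σ' m (vg i) = vg (m i) := by
  simp [extFun, vg]

lemma eq_e_or_vg {n : ℕ} (x : V (n+1)) : (∃ y : V n, x = e y) ∨ ∃ i, x = vg i := by
  by_cases h : x.1 = Fin.last n
  · exact Or.inr ⟨x.2, Prod.ext h rfl⟩
  · exact Or.inl ⟨(x.1.castPred h, x.2), by simp [e]⟩

lemma extFun_invol {n : ℕ} {σ' : Perm (V n)} {m : Fin 4 → Fin 4}
    (h1 : ∀ x, σ' (σ' x) = x) (hm : ∀ i, m (m i) = i) :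
    Function.Involutive (extFun σ' m) := by
  intro x
  rcases eq_e_or_vg x with ⟨y, rfl⟩ | ⟨i, rfl⟩
  · rw [extFun_e, extFun_e, h1]
  · rw [extFun_vg, extFun_vg, hm]

lemma extFun_fpf {n : ℕ} {σ' : Perm (V n)} {m : Fin 4 → Fin 4}
    (h1 : ∀ x, σ' x ≠ x) (hm : ∀ i, m i ≠ i) (x : V (n+1)) :
    extFun σ' m x ≠ x := by
  rcases eq_e_or_vg x with ⟨y, rfl⟩ | ⟨i, rfl⟩
  · rw [extFun_e]; exact fun h => h1 y (e_inj h)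
  · rw [extFun_vg]; exact fun h => hm i (vg_inj h)

def basePerm {n : ℕ} (σ' : Perm (V n)) (h1 : ∀ x, σ' (σ' x) = x)
    (m : Fin 4 → Fin 4) (hm : ∀ i, m (m i) = i) : Perm (V (n+1)) :=
  Function.Involutive.toPerm _ (extFun_invol h1 hm)

@[simp] lemma basePerm_apply {n : ℕ} (σ' : Perm (V n)) (h1) (m) (hm) (x : V (n+1)) :
    basePerm σ' h1 m hm x = extFun σ' m x := rfl

end CP
namespace CP

def conj {α : Type*} (π b : Equiv.Perm α) : Equiv.Perm α := π * b * π⁻¹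

lemma conj_apply {α : Type*} (π b : Equiv.Perm α) (x : α) :
    conj π b x = π (b (π⁻¹ x)) := rfl

lemma conj_invol {α : Type*} {π b : Equiv.Perm α} (hb : ∀ x, b (b x) = x) (x : α) :
    conj π b (conj π b x) = x := by
  simp [conj_apply, hb]

lemma conj_fpf {α : Type*} {π b : Equiv.Perm α} (hb : ∀ x, b x ≠ x) (x : α) :
    conj π b x ≠ x := by
  rw [conj_apply]
  intro h
  exact hb (π⁻¹ x) (π.injective (by simpa using h))

/-- the three fixed-point-free involutions of `Fin 4` -/
def mA : Fin 4 → Fin 4 := ![1, 0, 3, 2]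
def mB : Fin 4 → Fin 4 := ![2, 3, 0, 1]
def mC : Fin 4 → Fin 4 := ![3, 2, 1, 0]

/-- special insertion: conjugate `basePerm σ' m` by `swap (vg s) (e a)` -/
def sSpec {n : ℕ} (σ' : Equiv.Perm (V n)) (h1 : ∀ x, σ' (σ' x) = x) (a : V n)
    (m : Fin 4 → Fin 4) (hm : ∀ i, m (m i) = i) (s : Fin 4) : Equiv.Perm (V (n+1)) :=
  conj (Equiv.swap (vg s) (e a)) (basePerm σ' h1 m hm)

/-- main insertion -/
def sMain {n : ℕ} (σ' : Equiv.Perm (V n)) (h1 : ∀ x, σ' (σ' x) = x) (a c : V n) :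
    Equiv.Perm (V (n+1)) :=
  conj (Equiv.swap (vg 0) (e a) * Equiv.swap (vg 2) (e c))
    (basePerm σ' h1 mA (by decide))

section values
variable {n : ℕ} {σ' : Equiv.Perm (V n)} {h1 : ∀ x, σ' (σ' x) = x}

-- sSpec values
lemma sSpec_vg_s (hf : ∀ x, σ' x ≠ x) {a : V n} {m : Fin 4 → Fin 4} {hm : ∀ i, m (m i) = i} {s : Fin 4} :
    sSpec σ' h1 a m hm s (vg s) = e (σ' a) := by
  rw [sSpec, conj_apply, Equiv.swap_inv, Equiv.swap_apply_left, basePerm_apply,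
    extFun_e, Equiv.swap_apply_of_ne_of_ne (e_ne_vg _ _)
      (fun h => hf a (e_inj h))]

lemma sSpec_vg_ms {a : V n} {m : Fin 4 → Fin 4} {hm : ∀ i, m (m i) = i} {s : Fin 4}
    (hss : m s ≠ s) :
    sSpec σ' h1 a m hm s (vg (m s)) = e a := by
  rw [sSpec, conj_apply, Equiv.swap_inv,
    Equiv.swap_apply_of_ne_of_ne (fun h => hss (vg_inj h)) (Ne.symm (e_ne_vg _ _)),
    basePerm_apply, extFun_vg, hm, Equiv.swap_apply_left]

lemma sSpec_vg_other {a : V n} {m : Fin 4 → Fin 4} {hm : ∀ i, m (m i) = i} {s p : Fin 4}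
    (hp : p ≠ s) (hmp : m p ≠ s) :
    sSpec σ' h1 a m hm s (vg p) = vg (m p) := by
  rw [sSpec, conj_apply, Equiv.swap_inv,
    Equiv.swap_apply_of_ne_of_ne (fun h => hp (vg_inj h)) (Ne.symm (e_ne_vg _ _)),
    basePerm_apply, extFun_vg,
    Equiv.swap_apply_of_ne_of_ne (fun h => hmp (vg_inj h)) (Ne.symm (e_ne_vg _ _))]

lemma sSpec_e {a : V n} {m : Fin 4 → Fin 4} {hm : ∀ i, m (m i) = i} {s : Fin 4}
    {x : V n} (hxa : x ≠ a) (hxsa : x ≠ σ' a) :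
    sSpec σ' h1 a m hm s (e x) = e (σ' x) := by
  rw [sSpec, conj_apply, Equiv.swap_inv,
    Equiv.swap_apply_of_ne_of_ne (e_ne_vg _ _) (fun h => hxa (e_inj h)),
    basePerm_apply, extFun_e,
    Equiv.swap_apply_of_ne_of_ne (e_ne_vg _ _)
      (fun h => hxsa (by rw [← h1 x, e_inj h]))]

end values
end CP
namespace CP
section mainvals
variable {n : ℕ} {σ' : Equiv.Perm (V n)} {h1 : ∀ x, σ' (σ' x) = x} {a c : V n}

lemma vg_ne {n : ℕ} {i j : Fin 4} (h : i ≠ j) : vg (n := n) i ≠ vg j :=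
  fun hh => h (vg_inj hh)

lemma e_ne {x y : V n} (h : x ≠ y) : e x ≠ e y := fun hh => h (e_inj hh)

lemma sMain_unfold (x : V (n+1)) :
    sMain σ' h1 a c x =
      Equiv.swap (vg 0) (e a) (Equiv.swap (vg 2) (e c)
        (extFun σ' mA (Equiv.swap (vg 2) (e c) (Equiv.swap (vg 0) (e a) x)))) := by
  simp [sMain, conj_apply, mul_inv_rev, Equiv.swap_inv, Equiv.Perm.mul_apply]

lemma sMain_vg0 (hf : ∀ x, σ' x ≠ x) (hca : c ≠ a) (hcsa : c ≠ σ' a) :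
    sMain σ' h1 a c (vg 0) = e (σ' a) := by
  rw [sMain_unfold, Equiv.swap_apply_left,
    Equiv.swap_apply_of_ne_of_ne (e_ne_vg _ _) (e_ne (Ne.symm hca)),
    extFun_e,
    Equiv.swap_apply_of_ne_of_ne (e_ne_vg _ _) (e_ne (Ne.symm hcsa)),
    Equiv.swap_apply_of_ne_of_ne (e_ne_vg _ _) (e_ne (hf a))]

lemma sMain_vg1 : sMain σ' h1 a c (vg 1) = e a := by
  rw [sMain_unfold,
    Equiv.swap_apply_of_ne_of_ne (vg_ne (by decide)) (Ne.symm (e_ne_vg _ _)),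
    Equiv.swap_apply_of_ne_of_ne (vg_ne (by decide)) (Ne.symm (e_ne_vg _ _)),
    extFun_vg, show mA 1 = 0 from rfl,
    Equiv.swap_apply_of_ne_of_ne (vg_ne (by decide)) (Ne.symm (e_ne_vg _ _)),
    Equiv.swap_apply_left]

lemma sMain_vg2 (hf : ∀ x, σ' x ≠ x) (hcsa : c ≠ σ' a) :
    sMain σ' h1 a c (vg 2) = e (σ' c) := by
  have hsca : σ' c ≠ a := fun h => hcsa (by rw [← h1 c, h])
  rw [sMain_unfold,
    Equiv.swap_apply_of_ne_of_ne (vg_ne (by decide)) (Ne.symm (e_ne_vg _ _)),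
    Equiv.swap_apply_left, extFun_e,
    Equiv.swap_apply_of_ne_of_ne (e_ne_vg _ _) (e_ne (hf c)),
    Equiv.swap_apply_of_ne_of_ne (e_ne_vg _ _) (e_ne hsca)]

lemma sMain_vg3 (hca : c ≠ a) : sMain σ' h1 a c (vg 3) = e c := by
  rw [sMain_unfold,
    Equiv.swap_apply_of_ne_of_ne (vg_ne (by decide)) (Ne.symm (e_ne_vg _ _)),
    Equiv.swap_apply_of_ne_of_ne (vg_ne (by decide)) (Ne.symm (e_ne_vg _ _)),
    extFun_vg, show mA 3 = 2 from rfl,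
    Equiv.swap_apply_left,
    Equiv.swap_apply_of_ne_of_ne (e_ne_vg _ _) (e_ne hca)]

lemma sMain_e {x : V n} (hxa : x ≠ a) (hxsa : x ≠ σ' a) (hxc : x ≠ c)
    (hxsc : x ≠ σ' c) : sMain σ' h1 a c (e x) = e (σ' x) := by
  have h1' : σ' x ≠ a := fun h => hxsa (by rw [← h1 x, h])
  have h2' : σ' x ≠ c := fun h => hxsc (by rw [← h1 x, h])
  rw [sMain_unfold,
    Equiv.swap_apply_of_ne_of_ne (e_ne_vg _ _) (e_ne hxa),
    Equiv.swap_apply_of_ne_of_ne (e_ne_vg _ _) (e_ne hxc),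
    extFun_e,
    Equiv.swap_apply_of_ne_of_ne (e_ne_vg _ _) (e_ne h2'),
    Equiv.swap_apply_of_ne_of_ne (e_ne_vg _ _) (e_ne h1')]

end mainvals
end CP
namespace CP

def G {n : ℕ} (σ : Equiv.Perm (V n)) : SimpleGraph (Fin n) :=
  SimpleGraph.fromRel (fun v w => ∃ i j : Fin 4, σ (v, i) = (w, j))

lemma reach_e {n : ℕ} {σ : Equiv.Perm (V (n+1))} {x y : V n} (h : σ (e x) = e y) :
    (G σ).Reachable x.1.castSucc y.1.castSucc := by
  by_cases hv : x.1.castSucc = y.1.castSucc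
  · rw [hv]
  · exact SimpleGraph.Adj.reachable
      ((SimpleGraph.fromRel_adj _ _ _).2 ⟨hv, Or.inl ⟨x.2, y.2, h⟩⟩)

lemma adj_last {n : ℕ} {σ : Equiv.Perm (V (n+1))} {i : Fin 4} {y : V n}
    (h : σ (vg i) = e y) : (G σ).Adj (Fin.last n) y.1.castSucc :=
  (SimpleGraph.fromRel_adj _ _ _).2
    ⟨(Fin.castSucc_lt_last y.1).ne', Or.inl ⟨i, y.2, h⟩⟩

lemma conn_of {n : ℕ} {σ : Equiv.Perm (V (n+1))} {σ' : Equiv.Perm (V n)}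
    (hc : (G σ').Connected)
    (hx : ∀ x : V n, (G σ).Reachable x.1.castSucc (σ' x).1.castSucc)
    {u0 : Fin n} (hv : (G σ).Reachable (Fin.last n) u0.castSucc) :
    (G σ).Connected := by
  have key : ∀ p q : Fin n, (G σ).Reachable p.castSucc q.castSucc := by
    intro p q
    obtain ⟨w⟩ := hc.preconnected p q
    induction w with
    | nil => exact SimpleGraph.Reachable.refl _
    | @cons u b q' hadj wtail ih =>
      refine SimpleGraph.Reachable.trans ?_ ih
      obtain ⟨hne, hrel⟩ := (SimpleGraph.fromRel_adj _ _ _).1 hadj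
      rcases hrel with ⟨i, j, hs⟩ | ⟨i, j, hs⟩
      · have := hx (u, i)
        rw [hs] at this
        exact this
      · have := hx (b, i)
        rw [hs] at this
        exact this.symm
  have toLast : ∀ u : Fin (n+1), (G σ).Reachable u (Fin.last n) := by
    intro u
    induction u using Fin.lastCases with
    | last => exact SimpleGraph.Reachable.refl _
    | cast p => exact (key p u0).trans hv.symm
  exact ⟨fun u w => (toLast u).trans (toLast w).symm⟩

end CP
namespace CP
section conn
variable {n : ℕ} {σ' : Equiv.Perm (V n)} {h1 : ∀ x, σ' (σ' x) = x}

lemma sSpec_conn (hf : ∀ x, σ' x ≠ x) (hc : (G σ').Connected) {a : V n}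
    {m : Fin 4 → Fin 4} {hm : ∀ i, m (m i) = i} {s : Fin 4} (hss : m s ≠ s) :
    (G (sSpec σ' h1 a m hm s)).Connected := by
  have adjA : (G (sSpec σ' h1 a m hm s)).Adj (Fin.last n) a.1.castSucc :=
    adj_last (sSpec_vg_ms hss)
  have adjSA : (G (sSpec σ' h1 a m hm s)).Adj (Fin.last n) (σ' a).1.castSucc :=
    adj_last (sSpec_vg_s hf)
  refine conn_of hc ?_ (u0 := a.1) adjA.reachable
  intro x
  by_cases hxa : x = a
  · subst hxa
    exact adjA.reachable.symm.trans adjSA.reachable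
  · by_cases hxsa : x = σ' a
    · subst hxsa
      rw [h1 a]
      exact adjSA.reachable.symm.trans adjA.reachable
    · exact reach_e (sSpec_e hxa hxsa)

lemma sMain_conn (hf : ∀ x, σ' x ≠ x) (hc : (G σ').Connected) {a c : V n}
    (hca : c ≠ a) (hcsa : c ≠ σ' a) :
    (G (sMain σ' h1 a c)).Connected := by
  have adjA : (G (sMain σ' h1 a c)).Adj (Fin.last n) a.1.castSucc :=
    adj_last sMain_vg1
  have adjSA : (G (sMain σ' h1 a c)).Adj (Fin.last n) (σ' a).1.castSucc :=
    adj_last (sMain_vg0 hf hca hcsa)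
  have adjC : (G (sMain σ' h1 a c)).Adj (Fin.last n) c.1.castSucc :=
    adj_last (sMain_vg3 hca)
  have adjSC : (G (sMain σ' h1 a c)).Adj (Fin.last n) (σ' c).1.castSucc :=
    adj_last (sMain_vg2 hf hcsa)
  refine conn_of hc ?_ (u0 := a.1) adjA.reachable
  intro x
  by_cases hxa : x = a
  · subst hxa; exact adjA.reachable.symm.trans adjSA.reachable
  · by_cases hxsa : x = σ' a
    · subst hxsa; rw [h1 a]
      exact adjSA.reachable.symm.trans adjA.reachable
    · by_cases hxc : x = c
      · subst hxc; exact adjC.reachable.symm.trans adjSC.reachable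
      · by_cases hxsc : x = σ' c
        · subst hxsc; rw [h1 c]
          exact adjSC.reachable.symm.trans adjC.reachable
        · exact reach_e (sMain_e hxa hxsa hxc hxsc)

end conn
end CP
namespace CP

abbrev P (n : ℕ) := V n × (V n ⊕ Fin 4)

def hook {n : ℕ} (σ' : Equiv.Perm (V n)) (h1 : ∀ x, σ' (σ' x) = x) (p : P n) :
    Equiv.Perm (V (n+1)) :=
  match p.2 with
  | Sum.inr j =>
    if j = 0 then sSpec σ' h1 p.1 mA (by decide) 0
    else if j = 1 then sSpec σ' h1 p.1 mB (by decide) 0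
    else if j = 2 then sSpec σ' h1 p.1 mC (by decide) 0
    else sSpec σ' h1 p.1 mA (by decide) 2
  | Sum.inl c =>
    if c = p.1 then sSpec σ' h1 p.1 mB (by decide) 1
    else if c = σ' p.1 then sSpec σ' h1 p.1 mC (by decide) 1
    else sMain σ' h1 p.1 c

section good
variable {n : ℕ} {σ' : Equiv.Perm (V n)} {h1 : ∀ x, σ' (σ' x) = x}

lemma sSpec_invol {a : V n} {m : Fin 4 → Fin 4} {hm : ∀ i, m (m i) = i} {s : Fin 4}
    (x : V (n+1)) : sSpec σ' h1 a m hm s (sSpec σ' h1 a m hm s x) = x :=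
  conj_invol (fun y => extFun_invol h1 hm y) x

lemma sSpec_fpf (hf : ∀ x, σ' x ≠ x) {a : V n} {m : Fin 4 → Fin 4}
    {hm : ∀ i, m (m i) = i} {s : Fin 4} (hmf : ∀ i, m i ≠ i) (x : V (n+1)) :
    sSpec σ' h1 a m hm s x ≠ x :=
  conj_fpf (fun y => extFun_fpf hf hmf y) x

lemma sMain_invol {a c : V n} (x : V (n+1)) :
    sMain σ' h1 a c (sMain σ' h1 a c x) = x :=
  conj_invol (fun y => extFun_invol h1 (by decide) y) x

lemma sMain_fpf (hf : ∀ x, σ' x ≠ x) {a c : V n} (x : V (n+1)) :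
    sMain σ' h1 a c x ≠ x :=
  conj_fpf (fun y => extFun_fpf hf (by decide) y) x

lemma hook_good (hf : ∀ x, σ' x ≠ x) (hc : (G σ').Connected) (p : P n) :
    (∀ x, hook σ' h1 p (hook σ' h1 p x) = x) ∧ (∀ x, hook σ' h1 p x ≠ x) ∧
      (G (hook σ' h1 p)).Connected := by
  obtain ⟨a, c | j⟩ := p
  · by_cases h : c = a
    · simp only [hook, h, if_pos rfl]
      exact ⟨sSpec_invol, sSpec_fpf hf (by decide), sSpec_conn hf hc (by decide)⟩
    · by_cases h2 : c = σ' a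
      · simp only [hook, if_neg h, if_pos h2]
        exact ⟨sSpec_invol, sSpec_fpf hf (by decide), sSpec_conn hf hc (by decide)⟩
      · simp only [hook, if_neg h, if_neg h2]
        exact ⟨sMain_invol, sMain_fpf hf, sMain_conn hf hc h h2⟩
  · fin_cases j <;>
      simp only [hook] <;>
      exact ⟨sSpec_invol, sSpec_fpf hf (by decide), sSpec_conn hf hc (by decide)⟩
end good
end CP
namespace CP
section patt
variable {n : ℕ} {σ' : Equiv.Perm (V n)} {h1 : ∀ x, σ' (σ' x) = x}

def patt {n : ℕ} (σ : Equiv.Perm (V (n+1))) : Fin 4 → Bool :=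
  fun i => decide ((σ (vg i)).1 = Fin.last n)

lemma patt_false {σ : Equiv.Perm (V (n+1))} {i : Fin 4} {y : V n}
    (h : σ (vg i) = e y) : patt σ i = false := by
  simp only [patt]
  rw [h]
  simp [e, (Fin.castSucc_lt_last y.1).ne]

lemma patt_true {σ : Equiv.Perm (V (n+1))} {i j : Fin 4}
    (h : σ (vg i) = vg j) : patt σ i = true := by
  simp only [patt]
  rw [h]
  simp [vg]

lemma patt_sMain (hf : ∀ x, σ' x ≠ x) {a c : V n} (hca : c ≠ a) (hcsa : c ≠ σ' a) :
    patt (sMain σ' h1 a c) = ![false, false, false, false] := by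
  funext i
  fin_cases i
  · exact patt_false (sMain_vg0 hf hca hcsa)
  · exact patt_false sMain_vg1
  · exact patt_false (sMain_vg2 hf hcsa)
  · exact patt_false (sMain_vg3 hca)

lemma patt_sSpec (hf : ∀ x, σ' x ≠ x) {a : V n} {m : Fin 4 → Fin 4}
    {hm : ∀ i, m (m i) = i} {s : Fin 4} (hss : m s ≠ s) :
    patt (sSpec σ' h1 a m hm s) = fun i => !(decide (i = s) || decide (i = m s)) := by
  funext i
  by_cases hi : i = s
  · subst hi
    rw [patt_false (sSpec_vg_s hf)]
    simp
  · by_cases hi2 : i = m s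
    · subst hi2
      rw [patt_false (sSpec_vg_ms hss)]
      simp
    · have him : m i ≠ s := fun h => hi2 (by rw [← hm i, h])
      rw [patt_true (sSpec_vg_other hi him)]
      simp [hi, hi2]

end patt
end CP
namespace CP
section inj
variable {n : ℕ} {σ'₁ σ'₂ : Equiv.Perm (V n)} {h1₁ : ∀ x, σ'₁ (σ'₁ x) = x}
  {h1₂ : ∀ x, σ'₂ (σ'₂ x) = x}

lemma sSpec_inj (hf₁ : ∀ x, σ'₁ x ≠ x) (hf₂ : ∀ x, σ'₂ x ≠ x) {a₁ a₂ : V n}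
    {m : Fin 4 → Fin 4} {hm₁ hm₂ : ∀ i, m (m i) = i} {s : Fin 4} (hss : m s ≠ s)
    (hE : sSpec σ'₁ h1₁ a₁ m hm₁ s = sSpec σ'₂ h1₂ a₂ m hm₂ s) :
    σ'₁ = σ'₂ ∧ a₁ = a₂ := by
  have ha : a₁ = a₂ := e_inj (by
    rw [← sSpec_vg_ms (σ' := σ'₁) (h1 := h1₁) (a := a₁) (hm := hm₁) hss, hE,
      sSpec_vg_ms hss])
  subst ha
  have hsa : σ'₁ a₁ = σ'₂ a₁ := e_inj (by
    rw [← sSpec_vg_s (h1 := h1₁) (hm := hm₁) (s := s) hf₁, hE, sSpec_vg_s hf₂])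
  refine ⟨Equiv.ext fun x => ?_, rfl⟩
  by_cases hxa : x = a₁
  · subst hxa; exact hsa
  · by_cases hxsa : x = σ'₁ a₁
    · subst hxsa
      rw [h1₁ a₁, hsa, h1₂ a₁]
    · have hxsa2 : x ≠ σ'₂ a₁ := fun h => hxsa (h.trans hsa.symm)
      exact e_inj (by
        rw [← sSpec_e (h1 := h1₁) (m := m) (hm := hm₁) (s := s) hxa hxsa, hE,
          sSpec_e hxa hxsa2])

lemma sMain_inj (hf₁ : ∀ x, σ'₁ x ≠ x) (hf₂ : ∀ x, σ'₂ x ≠ x) {a₁ a₂ c₁ c₂ : V n}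
    (hca₁ : c₁ ≠ a₁) (hcsa₁ : c₁ ≠ σ'₁ a₁) (hca₂ : c₂ ≠ a₂) (hcsa₂ : c₂ ≠ σ'₂ a₂)
    (hE : sMain σ'₁ h1₁ a₁ c₁ = sMain σ'₂ h1₂ a₂ c₂) :
    σ'₁ = σ'₂ ∧ a₁ = a₂ ∧ c₁ = c₂ := by
  have ha : a₁ = a₂ := e_inj (by
    rw [← sMain_vg1 (σ' := σ'₁) (h1 := h1₁) (a := a₁) (c := c₁), hE, sMain_vg1])
  subst ha
  have hc : c₁ = c₂ := e_inj (by
    rw [← sMain_vg3 (σ' := σ'₁) (h1 := h1₁) hca₁, hE, sMain_vg3 hca₂])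
  subst hc
  have hsa : σ'₁ a₁ = σ'₂ a₁ := e_inj (by
    rw [← sMain_vg0 (h1 := h1₁) hf₁ hca₁ hcsa₁, hE, sMain_vg0 hf₂ hca₂ hcsa₂])
  have hsc : σ'₁ c₁ = σ'₂ c₁ := e_inj (by
    rw [← sMain_vg2 (h1 := h1₁) hf₁ hcsa₁, hE, sMain_vg2 hf₂ hcsa₂])
  refine ⟨Equiv.ext fun x => ?_, rfl, rfl⟩
  by_cases hxa : x = a₁
  · subst hxa; exact hsa
  · by_cases hxsa : x = σ'₁ a₁
    · subst hxsa; rw [h1₁ a₁, hsa, h1₂ a₁]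
    · by_cases hxc : x = c₁
      · subst hxc; exact hsc
      · by_cases hxsc : x = σ'₁ c₁
        · subst hxsc; rw [h1₁ c₁, hsc, h1₂ c₁]
        · have hxsa2 : x ≠ σ'₂ a₁ := fun h => hxsa (h.trans hsa.symm)
          have hxsc2 : x ≠ σ'₂ c₁ := fun h => hxsc (h.trans hsc.symm)
          exact e_inj (by
            rw [← sMain_e (h1 := h1₁) hxa hxsa hxc hxsc, hE,
              sMain_e hxa hxsa2 hxc hxsc2])

end inj
end CP
namespace CP
lemma hook_inj {n : ℕ} {σ'₁ σ'₂ : Equiv.Perm (V n)} {h1₁ : ∀ x, σ'₁ (σ'₁ x) = x}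
    {h1₂ : ∀ x, σ'₂ (σ'₂ x) = x} (hf₁ : ∀ x, σ'₁ x ≠ x) (hf₂ : ∀ x, σ'₂ x ≠ x)
    {p₁ p₂ : P n} (hE : hook σ'₁ h1₁ p₁ = hook σ'₂ h1₂ p₂) :
    σ'₁ = σ'₂ ∧ p₁ = p₂ := by
  obtain ⟨a₁, c₁ | j₁⟩ := p₁ <;> obtain ⟨a₂, c₂ | j₂⟩ := p₂
  · -- inl inl
    by_cases e11 : c₁ = a₁
    · -- F1
      by_cases e21 : c₂ = a₂
      · -- F1
        simp only [hook, if_pos e11, if_pos e21] at hE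
        obtain ⟨hs, ha⟩ := sSpec_inj hf₁ hf₂ (by decide) hE
        exact ⟨hs, by rw [e11, e21, ha]⟩
      · by_cases e22 : c₂ = σ'₂ a₂
        · -- F2
          simp only [hook, if_pos e11, if_neg e21, if_pos e22] at hE
          have hp := congrArg patt hE
          rw [patt_sSpec hf₁ (by decide), patt_sSpec hf₂ (by decide)] at hp
          exact absurd hp (by decide)
        · -- F3
          simp only [hook, if_pos e11, if_neg e21, if_neg e22] at hE
          have hp := congrArg patt hE
          rw [patt_sSpec hf₁ (by decide), patt_sMain hf₂ e21 e22] at hp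
          exact absurd hp (by decide)
    · by_cases e12 : c₁ = σ'₁ a₁
      · -- F2
        by_cases e21 : c₂ = a₂
        · -- F1
          simp only [hook, if_neg e11, if_pos e12, if_pos e21] at hE
          have hp := congrArg patt hE
          rw [patt_sSpec hf₁ (by decide), patt_sSpec hf₂ (by decide)] at hp
          exact absurd hp (by decide)
        · by_cases e22 : c₂ = σ'₂ a₂
          · -- F2
            simp only [hook, if_neg e11, if_pos e12, if_neg e21, if_pos e22] at hE
            obtain ⟨hs, ha⟩ := sSpec_inj hf₁ hf₂ (by decide) hE
            exact ⟨hs, by rw [e12, e22, ha, hs]⟩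
          · -- F3
            simp only [hook, if_neg e11, if_pos e12, if_neg e21, if_neg e22] at hE
            have hp := congrArg patt hE
            rw [patt_sSpec hf₁ (by decide), patt_sMain hf₂ e21 e22] at hp
            exact absurd hp (by decide)
      · -- F3
        by_cases e21 : c₂ = a₂
        · -- F1
          simp only [hook, if_neg e11, if_neg e12, if_pos e21] at hE
          have hp := congrArg patt hE
          rw [patt_sMain hf₁ e11 e12, patt_sSpec hf₂ (by decide)] at hp
          exact absurd hp (by decide)
        · by_cases e22 : c₂ = σ'₂ a₂
          · -- F2
            simp only [hook, if_neg e11, if_neg e12, if_neg e21, if_pos e22] at hE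
            have hp := congrArg patt hE
            rw [patt_sMain hf₁ e11 e12, patt_sSpec hf₂ (by decide)] at hp
            exact absurd hp (by decide)
          · -- F3
            simp only [hook, if_neg e11, if_neg e12, if_neg e21, if_neg e22] at hE
            obtain ⟨hs, ha, hc⟩ := sMain_inj hf₁ hf₂ e11 e12 e21 e22 hE
            exact ⟨hs, by rw [ha, hc]⟩
  · -- inl inr
    by_cases e11 : c₁ = a₁
    · -- F1
      by_cases ej2 : j₂ = 0
      · -- J0
        simp only [hook, if_pos e11, if_pos ej2] at hE
        have hp := congrArg patt hE
        rw [patt_sSpec hf₁ (by decide), patt_sSpec hf₂ (by decide)] at hp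
        exact absurd hp (by decide)
      · by_cases ej2' : j₂ = 1
        · -- J1
          simp only [hook, if_pos e11, if_neg ej2, if_pos ej2'] at hE
          have hp := congrArg patt hE
          rw [patt_sSpec hf₁ (by decide), patt_sSpec hf₂ (by decide)] at hp
          exact absurd hp (by decide)
        · by_cases ej2'' : j₂ = 2
          · -- J2
            simp only [hook, if_pos e11, if_neg ej2, if_neg ej2', if_pos ej2''] at hE
            have hp := congrArg patt hE
            rw [patt_sSpec hf₁ (by decide), patt_sSpec hf₂ (by decide)] at hp
            exact absurd hp (by decide)
          · -- J3
            simp only [hook, if_pos e11, if_neg ej2, if_neg ej2', if_neg ej2''] at hE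
            have hp := congrArg patt hE
            rw [patt_sSpec hf₁ (by decide), patt_sSpec hf₂ (by decide)] at hp
            exact absurd hp (by decide)
    · by_cases e12 : c₁ = σ'₁ a₁
      · -- F2
        by_cases ej2 : j₂ = 0
        · -- J0
          simp only [hook, if_neg e11, if_pos e12, if_pos ej2] at hE
          have hp := congrArg patt hE
          rw [patt_sSpec hf₁ (by decide), patt_sSpec hf₂ (by decide)] at hp
          exact absurd hp (by decide)
        · by_cases ej2' : j₂ = 1
          · -- J1
            simp only [hook, if_neg e11, if_pos e12, if_neg ej2, if_pos ej2'] at hE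
            have hp := congrArg patt hE
            rw [patt_sSpec hf₁ (by decide), patt_sSpec hf₂ (by decide)] at hp
            exact absurd hp (by decide)
          · by_cases ej2'' : j₂ = 2
            · -- J2
              simp only [hook, if_neg e11, if_pos e12, if_neg ej2, if_neg ej2', if_pos ej2''] at hE
              have hp := congrArg patt hE
              rw [patt_sSpec hf₁ (by decide), patt_sSpec hf₂ (by decide)] at hp
              exact absurd hp (by decide)
            · -- J3
              simp only [hook, if_neg e11, if_pos e12, if_neg ej2, if_neg ej2', if_neg ej2''] at hE
              have hp := congrArg patt hE
              rw [patt_sSpec hf₁ (by decide), patt_sSpec hf₂ (by decide)] at hp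
              exact absurd hp (by decide)
      · -- F3
        by_cases ej2 : j₂ = 0
        · -- J0
          simp only [hook, if_neg e11, if_neg e12, if_pos ej2] at hE
          have hp := congrArg patt hE
          rw [patt_sMain hf₁ e11 e12, patt_sSpec hf₂ (by decide)] at hp
          exact absurd hp (by decide)
        · by_cases ej2' : j₂ = 1
          · -- J1
            simp only [hook, if_neg e11, if_neg e12, if_neg ej2, if_pos ej2'] at hE
            have hp := congrArg patt hE
            rw [patt_sMain hf₁ e11 e12, patt_sSpec hf₂ (by decide)] at hp
            exact absurd hp (by decide)
          · by_cases ej2'' : j₂ = 2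
            · -- J2
              simp only [hook, if_neg e11, if_neg e12, if_neg ej2, if_neg ej2', if_pos ej2''] at hE
              have hp := congrArg patt hE
              rw [patt_sMain hf₁ e11 e12, patt_sSpec hf₂ (by decide)] at hp
              exact absurd hp (by decide)
            · -- J3
              simp only [hook, if_neg e11, if_neg e12, if_neg ej2, if_neg ej2', if_neg ej2''] at hE
              have hp := congrArg patt hE
              rw [patt_sMain hf₁ e11 e12, patt_sSpec hf₂ (by decide)] at hp
              exact absurd hp (by decide)
  · -- inr inl
    by_cases ej1 : j₁ = 0
    · -- J0
      by_cases e21 : c₂ = a₂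
      · -- F1
        simp only [hook, if_pos ej1, if_pos e21] at hE
        have hp := congrArg patt hE
        rw [patt_sSpec hf₁ (by decide), patt_sSpec hf₂ (by decide)] at hp
        exact absurd hp (by decide)
      · by_cases e22 : c₂ = σ'₂ a₂
        · -- F2
          simp only [hook, if_pos ej1, if_neg e21, if_pos e22] at hE
          have hp := congrArg patt hE
          rw [patt_sSpec hf₁ (by decide), patt_sSpec hf₂ (by decide)] at hp
          exact absurd hp (by decide)
        · -- F3
          simp only [hook, if_pos ej1, if_neg e21, if_neg e22] at hE
          have hp := congrArg patt hE
          rw [patt_sSpec hf₁ (by decide), patt_sMain hf₂ e21 e22] at hp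
          exact absurd hp (by decide)
    · by_cases ej1' : j₁ = 1
      · -- J1
        by_cases e21 : c₂ = a₂
        · -- F1
          simp only [hook, if_neg ej1, if_pos ej1', if_pos e21] at hE
          have hp := congrArg patt hE
          rw [patt_sSpec hf₁ (by decide), patt_sSpec hf₂ (by decide)] at hp
          exact absurd hp (by decide)
        · by_cases e22 : c₂ = σ'₂ a₂
          · -- F2
            simp only [hook, if_neg ej1, if_pos ej1', if_neg e21, if_pos e22] at hE
            have hp := congrArg patt hE
            rw [patt_sSpec hf₁ (by decide), patt_sSpec hf₂ (by decide)] at hp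
            exact absurd hp (by decide)
          · -- F3
            simp only [hook, if_neg ej1, if_pos ej1', if_neg e21, if_neg e22] at hE
            have hp := congrArg patt hE
            rw [patt_sSpec hf₁ (by decide), patt_sMain hf₂ e21 e22] at hp
            exact absurd hp (by decide)
      · by_cases ej1'' : j₁ = 2
        · -- J2
          by_cases e21 : c₂ = a₂
          · -- F1
            simp only [hook, if_neg ej1, if_neg ej1', if_pos ej1'', if_pos e21] at hE
            have hp := congrArg patt hE
            rw [patt_sSpec hf₁ (by decide), patt_sSpec hf₂ (by decide)] at hp
            exact absurd hp (by decide)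
          · by_cases e22 : c₂ = σ'₂ a₂
            · -- F2
              simp only [hook, if_neg ej1, if_neg ej1', if_pos ej1'', if_neg e21, if_pos e22] at hE
              have hp := congrArg patt hE
              rw [patt_sSpec hf₁ (by decide), patt_sSpec hf₂ (by decide)] at hp
              exact absurd hp (by decide)
            · -- F3
              simp only [hook, if_neg ej1, if_neg ej1', if_pos ej1'', if_neg e21, if_neg e22] at hE
              have hp := congrArg patt hE
              rw [patt_sSpec hf₁ (by decide), patt_sMain hf₂ e21 e22] at hp
              exact absurd hp (by decide)
        · -- J3
          by_cases e21 : c₂ = a₂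
          · -- F1
            simp only [hook, if_neg ej1, if_neg ej1', if_neg ej1'', if_pos e21] at hE
            have hp := congrArg patt hE
            rw [patt_sSpec hf₁ (by decide), patt_sSpec hf₂ (by decide)] at hp
            exact absurd hp (by decide)
          · by_cases e22 : c₂ = σ'₂ a₂
            · -- F2
              simp only [hook, if_neg ej1, if_neg ej1', if_neg ej1'', if_neg e21, if_pos e22] at hE
              have hp := congrArg patt hE
              rw [patt_sSpec hf₁ (by decide), patt_sSpec hf₂ (by decide)] at hp
              exact absurd hp (by decide)
            · -- F3
              simp only [hook, if_neg ej1, if_neg ej1', if_neg ej1'', if_neg e21, if_neg e22] at hE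
              have hp := congrArg patt hE
              rw [patt_sSpec hf₁ (by decide), patt_sMain hf₂ e21 e22] at hp
              exact absurd hp (by decide)
  · -- inr inr
    by_cases ej1 : j₁ = 0
    · -- J0
      by_cases ej2 : j₂ = 0
      · -- J0
        simp only [hook, if_pos ej1, if_pos ej2] at hE
        obtain ⟨hs, ha⟩ := sSpec_inj hf₁ hf₂ (by decide) hE
        exact ⟨hs, by rw [ha, ej1, ej2]⟩
      · by_cases ej2' : j₂ = 1
        · -- J1
          simp only [hook, if_pos ej1, if_neg ej2, if_pos ej2'] at hE
          have hp := congrArg patt hE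
          rw [patt_sSpec hf₁ (by decide), patt_sSpec hf₂ (by decide)] at hp
          exact absurd hp (by decide)
        · by_cases ej2'' : j₂ = 2
          · -- J2
            simp only [hook, if_pos ej1, if_neg ej2, if_neg ej2', if_pos ej2''] at hE
            have hp := congrArg patt hE
            rw [patt_sSpec hf₁ (by decide), patt_sSpec hf₂ (by decide)] at hp
            exact absurd hp (by decide)
          · -- J3
            simp only [hook, if_pos ej1, if_neg ej2, if_neg ej2', if_neg ej2''] at hE
            have hp := congrArg patt hE
            rw [patt_sSpec hf₁ (by decide), patt_sSpec hf₂ (by decide)] at hp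
            exact absurd hp (by decide)
    · by_cases ej1' : j₁ = 1
      · -- J1
        by_cases ej2 : j₂ = 0
        · -- J0
          simp only [hook, if_neg ej1, if_pos ej1', if_pos ej2] at hE
          have hp := congrArg patt hE
          rw [patt_sSpec hf₁ (by decide), patt_sSpec hf₂ (by decide)] at hp
          exact absurd hp (by decide)
        · by_cases ej2' : j₂ = 1
          · -- J1
            simp only [hook, if_neg ej1, if_pos ej1', if_neg ej2, if_pos ej2'] at hE
            obtain ⟨hs, ha⟩ := sSpec_inj hf₁ hf₂ (by decide) hE
            exact ⟨hs, by rw [ha, ej1', ej2']⟩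
          · by_cases ej2'' : j₂ = 2
            · -- J2
              simp only [hook, if_neg ej1, if_pos ej1', if_neg ej2, if_neg ej2', if_pos ej2''] at hE
              have hp := congrArg patt hE
              rw [patt_sSpec hf₁ (by decide), patt_sSpec hf₂ (by decide)] at hp
              exact absurd hp (by decide)
            · -- J3
              simp only [hook, if_neg ej1, if_pos ej1', if_neg ej2, if_neg ej2', if_neg ej2''] at hE
              have hp := congrArg patt hE
              rw [patt_sSpec hf₁ (by decide), patt_sSpec hf₂ (by decide)] at hp
              exact absurd hp (by decide)
      · by_cases ej1'' : j₁ = 2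
        · -- J2
          by_cases ej2 : j₂ = 0
          · -- J0
            simp only [hook, if_neg ej1, if_neg ej1', if_pos ej1'', if_pos ej2] at hE
            have hp := congrArg patt hE
            rw [patt_sSpec hf₁ (by decide), patt_sSpec hf₂ (by decide)] at hp
            exact absurd hp (by decide)
          · by_cases ej2' : j₂ = 1
            · -- J1
              simp only [hook, if_neg ej1, if_neg ej1', if_pos ej1'', if_neg ej2, if_pos ej2'] at hE
              have hp := congrArg patt hE
              rw [patt_sSpec hf₁ (by decide), patt_sSpec hf₂ (by decide)] at hp
              exact absurd hp (by decide)
            · by_cases ej2'' : j₂ = 2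
              · -- J2
                simp only [hook, if_neg ej1, if_neg ej1', if_pos ej1'', if_neg ej2, if_neg ej2', if_pos ej2''] at hE
                obtain ⟨hs, ha⟩ := sSpec_inj hf₁ hf₂ (by decide) hE
                exact ⟨hs, by rw [ha, ej1'', ej2'']⟩
              · -- J3
                simp only [hook, if_neg ej1, if_neg ej1', if_pos ej1'', if_neg ej2, if_neg ej2', if_neg ej2''] at hE
                have hp := congrArg patt hE
                rw [patt_sSpec hf₁ (by decide), patt_sSpec hf₂ (by decide)] at hp
                exact absurd hp (by decide)
        · -- J3
          by_cases ej2 : j₂ = 0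
          · -- J0
            simp only [hook, if_neg ej1, if_neg ej1', if_neg ej1'', if_pos ej2] at hE
            have hp := congrArg patt hE
            rw [patt_sSpec hf₁ (by decide), patt_sSpec hf₂ (by decide)] at hp
            exact absurd hp (by decide)
          · by_cases ej2' : j₂ = 1
            · -- J1
              simp only [hook, if_neg ej1, if_neg ej1', if_neg ej1'', if_neg ej2, if_pos ej2'] at hE
              have hp := congrArg patt hE
              rw [patt_sSpec hf₁ (by decide), patt_sSpec hf₂ (by decide)] at hp
              exact absurd hp (by decide)
            · by_cases ej2'' : j₂ = 2
              · -- J2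
                simp only [hook, if_neg ej1, if_neg ej1', if_neg ej1'', if_neg ej2, if_neg ej2', if_pos ej2''] at hE
                have hp := congrArg patt hE
                rw [patt_sSpec hf₁ (by decide), patt_sSpec hf₂ (by decide)] at hp
                exact absurd hp (by decide)
              · -- J3
                simp only [hook, if_neg ej1, if_neg ej1', if_neg ej1'', if_neg ej2, if_neg ej2', if_neg ej2''] at hE
                obtain ⟨hs, ha⟩ := sSpec_inj hf₁ hf₂ (by decide) hE
                have hj1 : j₁ = 3 := by revert ej1 ej1' ej1''; fin_cases j₁ <;> decide
                have hj2 : j₂ = 3 := by revert ej2 ej2' ej2''; fin_cases j₂ <;> decide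
                exact ⟨hs, by rw [ha, hj1, hj2]⟩
end CP
namespace CP

abbrev Good (n : ℕ) := {σ : Equiv.Perm (Fin n × Fin 4) //
        (∀ x, σ (σ x) = x) ∧ (∀ x, σ x ≠ x) ∧
        (SimpleGraph.fromRel
          (fun v w : Fin n => ∃ i j : Fin 4, σ (v, i) = (w, j))).Connected}

lemma G_def {n : ℕ} (σ : Equiv.Perm (V n)) :
    G σ = SimpleGraph.fromRel (fun v w : Fin n => ∃ i j : Fin 4, σ (v, i) = (w, j)) := rfl

def F (n : ℕ) (q : Good n × P n) : Good (n+1) :=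
  ⟨hook q.1.1 q.1.2.1 q.2, hook_good q.1.2.2.1 q.1.2.2.2 q.2⟩

lemma F_inj (n : ℕ) : Function.Injective (F n) := by
  rintro ⟨⟨σ'₁, h1₁, hf₁, hc₁⟩, p₁⟩ ⟨⟨σ'₂, h1₂, hf₂, hc₂⟩, p₂⟩ h
  have hE : hook σ'₁ h1₁ p₁ = hook σ'₂ h1₂ p₂ := congrArg Subtype.val h
  obtain ⟨hs, hp⟩ := hook_inj hf₁ hf₂ hE
  subst hs; subst hp
  rfl

lemma card_P (n : ℕ) : Nat.card (P n) = 4 * n * (4 * n + 4) := by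
  simp [Nat.card_prod, Nat.card_sum, Nat.card_eq_fintype_card]
  ring

lemma step (n : ℕ) :
    Nat.card (Good n) * (4 * n * (4 * n + 4)) ≤ Nat.card (Good (n+1)) := by
  have h := Nat.card_le_card_of_injective (F n) (F_inj n)
  rwa [Nat.card_prod, card_P] at h

-- base case: two good pairings for n = 1
lemma conn_one (G' : SimpleGraph (Fin 1)) : G'.Connected := by
  rw [SimpleGraph.connected_iff]
  refine ⟨fun u w => ?_, ⟨0⟩⟩
  rw [Subsingleton.elim u w]

def base1 (m : Fin 4 → Fin 4) (hm : ∀ i, m (m i) = i) (hmf : ∀ i, m i ≠ i) : Good 1 :=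
  ⟨basePerm (Equiv.refl (V 0)) (fun _ => rfl) m hm,
    fun x => extFun_invol (fun _ => rfl) hm x,
    fun x => extFun_fpf (fun y => y.1.elim0) hmf x,
    conn_one _⟩

lemma base_card : 2 ≤ Nat.card (Good 1) := by
  have base1_ne : ∀ {m m' : Fin 4 → Fin 4} (hm : ∀ i, m (m i) = i)
      (hm' : ∀ i, m' (m' i) = i) (hmf : ∀ i, m i ≠ i) (hmf' : ∀ i, m' i ≠ i),
      m 0 ≠ m' 0 → base1 m hm hmf ≠ base1 m' hm' hmf' := by
    intro m m' hm hm' hmf hmf' hne h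
    have h2 := DFunLike.congr_fun (congrArg Subtype.val h) (vg 0)
    have kA : (base1 m hm hmf).1 (vg 0) = vg (m 0) := extFun_vg (Equiv.refl (V 0)) m 0
    have kB : (base1 m' hm' hmf').1 (vg 0) = vg (m' 0) := extFun_vg (Equiv.refl (V 0)) m' 0
    rw [kA, kB] at h2
    exact hne (vg_inj h2)
  have hAB : (base1 mA (by decide) (by decide)) ≠ (base1 mB (by decide) (by decide)) :=
    base1_ne _ _ _ _ (by decide)
  have hinj : Function.Injective (fun b : Bool =>
      if b then base1 mA (by decide) (by decide) else base1 mB (by decide) (by decide)) := by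
    intro b1 b2 h
    cases b1 <;> cases b2 <;> simp_all
  have := Nat.card_le_card_of_injective _ hinj
  simpa using this

end CP

open CP in
theorem card_connected_pairings_ge' (n : ℕ) (hn : 1 ≤ n) :
    (4 * n - 2)‼ ≤ Nat.card (Good n) := by
  induction n, hn using Nat.le_induction with
  | base => exact le_trans (by norm_num [Nat.doubleFactorial]) base_card
  | succ n hn ih =>
    have h4 : 4 * (n + 1) - 2 = 4 * n - 2 + 2 + 2 := by omega
    rw [h4, Nat.doubleFactorial_add_two, Nat.doubleFactorial_add_two]
    have h2 : 4 * n - 2 + 2 = 4 * n := by omega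
    have h1 : (4 * n - 2 + 2 + 2) * ((4 * n - 2 + 2) * (4 * n - 2)‼)
        ≤ (4 * n + 4) * (4 * n * Nat.card (Good n)) := by
      rw [h2]
      exact Nat.mul_le_mul (by omega) (Nat.mul_le_mul_left _ ih)
    refine h1.trans (le_of_eq_of_le ?_ (step n))
    ring

/-- For `n ≥ 1`, the number of fixed-point-free involutions `σ` of `Fin n × Fin 4`
such that the simple graph on `Fin n` — where distinct `v, w` are adjacent iff `σ`
maps some `(v,i)` to some `(w,j)` — is connected, is at least `(4n-2)‼`. -/
theorem card_connected_pairings_ge (n : ℕ) (hn : 1 ≤ n) :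
    (4 * n - 2)‼ ≤
      Nat.card {σ : Equiv.Perm (Fin n × Fin 4) //
        (∀ x, σ (σ x) = x) ∧ (∀ x, σ x ≠ x) ∧
        (SimpleGraph.fromRel
          (fun v w : Fin n => ∃ i j : Fin 4, σ (v, i) = (w, j))).Connected} :=
  card_connected_pairings_ge' n hn
end

section
/- There exist a real constant c > 0 and a natural number N such that for all n ≥ N, (4n−2)‼ / (24^n · n!) > n^{c·n}. -/
/-!
Since `(4n-2)‼ = 2^(2n-1) (2n-1)!` and `(2n-1)! ≥ n! n^(n-1)`, the quotient is at least
`(4n)^n / (2n · 24^n) = n^n / (2n · 6^n)`. Once `√n ≥ 18`, the denominator satisfies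
`2n · 6^n < 18^n ≤ n^(n/2)`, so `c = 1/2` works.
-/

open Nat

theorem doubleFactorial_four_mul_add_two (n : ℕ) :
    (4 * n + 2)‼ = 2 ^ (2 * n + 1) * (2 * n + 1)! := by
  rw [show 4 * n + 2 = 2 * (2 * n + 1) by ring, doubleFactorial_two_mul]

theorem factorial_mul_pow_le_factorial_two_mul_add_one (n : ℕ) :
    (n + 1)! * (n + 1) ^ n ≤ (2 * n + 1)! :=
  calc (n + 1)! * (n + 1) ^ n ≤ (n + 1)! * (n + 2) ^ n := by gcongr; omega
    _ ≤ (n + 1 + n)! := factorial_mul_pow_le_factorial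
    _ = (2 * n + 1)! := by congr 1; ring

theorem factorial_mul_four_mul_pow_le {n : ℕ} (hn : 0 < n) :
    n ! * (4 * n) ^ n ≤ 2 * n * (4 * n - 2)‼ := by
  obtain ⟨m, rfl⟩ := Nat.exists_eq_add_one_of_ne_zero hn.ne'
  rw [show 4 * (m + 1) - 2 = 4 * m + 2 by omega, doubleFactorial_four_mul_add_two]
  calc (m + 1)! * (4 * (m + 1)) ^ (m + 1)
      = 2 * (m + 1) * 2 ^ (2 * m + 1) * ((m + 1)! * (m + 1) ^ m) := by
        rw [mul_pow, pow_succ 2, pow_mul]; ring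
    _ ≤ 2 * (m + 1) * 2 ^ (2 * m + 1) * (2 * m + 1)! := by
      gcongr; exact factorial_mul_pow_le_factorial_two_mul_add_one m
    _ = 2 * (m + 1) * (2 ^ (2 * m + 1) * (2 * m + 1)!) := by ring

theorem two_mul_mul_six_pow_lt_sqrt_pow {n : ℕ} (hn : 324 ≤ n) :
    2 * n * 6 ^ n < √(n : ℝ) ^ n := by
  have h18 : (18 : ℝ) ≤ √(n : ℝ) := by
    rw [Real.le_sqrt' (by norm_num)]
    exact_mod_cast hn
  have hlin : 2 * (n : ℝ) < 3 ^ n := by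
    have := one_add_mul_le_pow (show (-2 : ℝ) ≤ 2 by norm_num) n
    norm_num at this
    linarith
  calc 2 * (n : ℝ) * 6 ^ n < 3 ^ n * 6 ^ n := by gcongr
    _ = 18 ^ n := by rw [← mul_pow]; norm_num
    _ ≤ √(n : ℝ) ^ n := by gcongr

/-- There are `c > 0` and `N` such that for all `n ≥ N`,
`(4n-2)‼ / (24^n · n!) > n^{cn}`. -/
theorem graph_count_lower_bound :
    ∃ c : ℝ, 0 < c ∧ ∃ N : ℕ, ∀ n : ℕ, N ≤ n →
      (n : ℝ) ^ (c * n) < ((4 * n - 2)‼ : ℝ) / (24 ^ n * (n ! : ℝ)) := by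
  refine ⟨1 / 2, by norm_num, 324, fun n hn => ?_⟩
  have hn0 : 0 < n := by omega
  have hsqrt : (n : ℝ) ^ (1 / 2 * (n : ℝ)) = √(n : ℝ) ^ n := by
    rw [Real.rpow_mul n.cast_nonneg, Real.rpow_natCast, Real.sqrt_eq_rpow]
  have hsq : √(n : ℝ) ^ n * √(n : ℝ) ^ n = (n : ℝ) ^ n := by
    rw [← mul_pow, Real.mul_self_sqrt n.cast_nonneg]
  have hcount : (n ! : ℝ) * (4 * n) ^ n ≤ 2 * n * (4 * n - 2)‼ := by
    exact_mod_cast factorial_mul_four_mul_pow_le hn0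
  rw [hsqrt, lt_div_iff₀ (by positivity)]
  refine lt_of_mul_lt_mul_left ?_ (by positivity : (0 : ℝ) ≤ 2 * n)
  calc 2 * n * (√(n : ℝ) ^ n * (24 ^ n * n !))
      = n ! * (4 ^ n * √(n : ℝ) ^ n) * (2 * n * 6 ^ n) := by
        rw [show (24 : ℝ) = 4 * 6 by norm_num, mul_pow]; ring
    _ < n ! * (4 ^ n * √(n : ℝ) ^ n) * √(n : ℝ) ^ n := by
        gcongr; exact two_mul_mul_six_pow_lt_sqrt_pow hn
    _ = n ! * (4 * n) ^ n := by rw [mul_pow, ← hsq]; ring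
    _ ≤ 2 * n * (4 * n - 2)‼ := hcount
end
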